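/- arXiv:1005.0416 — 4 statements merged into one kernel-verified Lean document; each statement's English description precedes it below -/
import Mathlib

section
/- Let d ≥ 2 and let x, y, z ∈ ℝ^d with y ≠ x and z ≠ x. If the angle between the vectors y − x and z − x is at most π/3, and ‖z − x‖ ≤ ‖z − y‖ (i.e., z is at least as close to x as to y), then ‖z − x‖ ≤ ‖y − x‖. -/
open InnerProductGeometry Real
open scoped RealInnerProductSpace

/-- If the angle at `x` between `y - x` and `z - x` is at most `π/3` and `z` is at
least as close to `x` as to `y`, then `‖z - x‖ ≤ ‖y - x‖`. -/
theorem rrt_cone_ball_inclusion (d : ℕ) (hd : 2 ≤ d)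
    (x y z : EuclideanSpace ℝ (Fin d)) (hy : y ≠ x) (hz : z ≠ x)
    (hangle : InnerProductGeometry.angle (y - x) (z - x) ≤ Real.pi / 3)
    (hclose : ‖z - x‖ ≤ ‖z - y‖) :
    ‖z - x‖ ≤ ‖y - x‖ := by
  set a := y - x with ha
  set b := z - x with hb
  have ha0 : a ≠ 0 := sub_ne_zero.mpr hy
  have hb0 : b ≠ 0 := sub_ne_zero.mpr hz
  have hna : 0 < ‖a‖ := norm_pos_iff.mpr ha0
  have hnb : 0 < ‖b‖ := norm_pos_iff.mpr hb0
  -- cos bound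
  have hcos : (1:ℝ)/2 ≤ Real.cos (InnerProductGeometry.angle a b) := by
    have h1 : Real.cos (π/3) = 1/2 := Real.cos_pi_div_three
    rw [← h1]
    apply Real.cos_le_cos_of_nonneg_of_le_pi (InnerProductGeometry.angle_nonneg a b)
    · linarith [Real.pi_pos]
    · exact hangle
  have hcos' : ⟪a, b⟫ / (‖a‖ * ‖b‖) = Real.cos (InnerProductGeometry.angle a b) :=
    (InnerProductGeometry.cos_angle a b).symm
  have hinner : ‖a‖ * ‖b‖ / 2 ≤ ⟪a, b⟫ := by
    have := hcos; rw [← hcos'] at this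
    have hpos : 0 < ‖a‖ * ‖b‖ := mul_pos hna hnb
    rw [div_le_div_iff₀ (by norm_num) hpos] at this
    linarith
  -- squared distance inequality
  have hsq : ‖b‖ ^ 2 ≤ ‖b - a‖ ^ 2 := by
    have : z - y = b - a := by rw [ha, hb]; abel
    rw [← this]
    exact pow_le_pow_left₀ (norm_nonneg _) hclose 2
  have hexp : ‖b - a‖ ^ 2 = ‖b‖ ^ 2 - 2 * ⟪a, b⟫ + ‖a‖ ^ 2 := by
    rw [norm_sub_sq_real, real_inner_comm b a]
  have key : 2 * ⟪a, b⟫ ≤ ‖a‖ ^ 2 := by nlinarith [hsq, hexp]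
  have : ‖a‖ * ‖b‖ ≤ ‖a‖ ^ 2 := by nlinarith
  nlinarith
end

section
/- Let d ≥ 1, let X ⊆ ℝ^d be a measurable set contained in the closed ball of radius D > 0 centered at a point x ∈ ℝ^d, and let μ be a probability measure on ℝ^d with μ(X) = 1 such that μ(A) ≥ f_min · λ(A ∩ X) for every measurable A, for some f_min > 0 (density bounded away from zero on X). Suppose moreover there exist c > 0 and t₀ > 0 such that λ(B̄(x,t) ∩ X) ≥ c t^d for all t ∈ (0, t₀]. Then there exists a constant β > 0 such that for every n ≥ 1, if X_1, …, X_n are i.i.d. with law μ, then E[(min_{1≤j≤n} ‖X_j − x‖)^d] ≤ β/n. -/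
/-!
Let `R` be the distance from `x` to the nearest sample and `a = fmin * c`. By independence and
the lower bounds on `μ`, `P(R ^ d > s) = (1 - μ B̄(x, s ^ (1/d))) ^ n ≤ exp (-n a s)` for
`s ≤ t₀ ^ d`; beyond that level the tail is at most `exp (-n a t₀ ^ d) ≤ 1 / (n a t₀ ^ d)`, and
it vanishes beyond `D ^ d` because the samples lie in `B̄(x, D)`. Integrating the tail gives
`E[R ^ d] ≤ (1 + D ^ d / t₀ ^ d) / (a n)`.
-/

open MeasureTheory ProbabilityTheory Set Metric

lemma lintegral_Ioi_ofReal_exp_neg_mul {κ : ℝ} (hκ : 0 < κ) :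
    ∫⁻ s in Ioi 0, ENNReal.ofReal (Real.exp (-κ * s)) = ENNReal.ofReal (1 / κ) := by
  rw [← ofReal_integral_eq_lintegral_ofReal (integrableOn_exp_mul_Ioi (neg_neg_of_pos hκ) 0)
    (ae_of_all _ fun _ ↦ (Real.exp_pos _).le), integral_exp_mul_Ioi (neg_neg_of_pos hκ)]
  simp [neg_div]

lemma ENNReal.one_sub_ofReal_pow_le_ofReal_exp {q : ℝ} (hq : 0 ≤ q) (n : ℕ) :
    (1 - ENNReal.ofReal q) ^ n ≤ ENNReal.ofReal (Real.exp (-(n * q))) := by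
  have h : 1 - ENNReal.ofReal q ≤ ENNReal.ofReal (Real.exp (-q)) := by
    rw [← ENNReal.ofReal_one, ← ENNReal.ofReal_sub _ hq]
    exact ENNReal.ofReal_le_ofReal (by linarith [Real.add_one_le_exp (-q)])
  calc (1 - ENNReal.ofReal q) ^ n ≤ ENNReal.ofReal (Real.exp (-q)) ^ n := by gcongr
    _ = ENNReal.ofReal (Real.exp (-(n * q))) := by
      rw [← ENNReal.ofReal_pow (Real.exp_pos _).le, ← Real.exp_nat_mul, mul_neg]

lemma lintegral_ofReal_le_of_tail_le_exp {Ω : Type*} [MeasurableSpace Ω] {P : Measure Ω}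
    {f : Ω → ℝ} (hf : 0 ≤ f) (hfm : AEMeasurable f P)
    {κ T M : ℝ} (hκ : 0 < κ) (hT : 0 < T) (hM₀ : 0 ≤ M) (hM : ∀ᵐ ω ∂P, f ω ≤ M)
    (htail : ∀ s ∈ Ioc 0 T, P {ω | s < f ω} ≤ ENNReal.ofReal (Real.exp (-κ * s))) :
    ∫⁻ ω, ENNReal.ofReal (f ω) ∂P ≤ ENNReal.ofReal ((1 + M / T) / κ) := by
  set C := ENNReal.ofReal (Real.exp (-κ * T))
  have hbound : ∀ s ∈ Ioi 0, P {ω | s < f ω} ≤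
      ENNReal.ofReal (Real.exp (-κ * s)) + (Iic M).indicator (fun _ ↦ C) s := by
    intro s hs
    by_cases hsM : s ≤ M
    · rw [indicator_of_mem (show s ∈ Iic M from hsM)]
      rcases le_or_gt s T with hsT | hTs
      · exact (htail s ⟨hs, hsT⟩).trans le_self_add
      · calc P {ω | s < f ω} ≤ P {ω | T < f ω} := measure_mono fun ω h ↦ hTs.trans h
          _ ≤ C := htail T ⟨hT, le_rfl⟩
          _ ≤ _ := le_add_self
    · have : P {ω | s < f ω} = 0 :=
        measure_eq_zero_iff_ae_notMem.mpr (hM.mono fun ω h h' ↦ hsM (h'.le.trans h))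
      rw [this]
      exact zero_le
  have hCT : C ≤ ENNReal.ofReal (1 / (κ * T)) := by
    refine ENNReal.ofReal_le_ofReal ?_
    rw [neg_mul, Real.exp_neg, one_div]
    exact inv_anti₀ (by positivity) (by linarith [Real.add_one_le_exp (κ * T)])
  calc ∫⁻ ω, ENNReal.ofReal (f ω) ∂P = ∫⁻ s in Ioi 0, P {ω | s < f ω} :=
        lintegral_eq_lintegral_meas_lt P (ae_of_all _ hf) hfm
    _ ≤ ∫⁻ s in Ioi 0, ENNReal.ofReal (Real.exp (-κ * s)) + (Iic M).indicator (fun _ ↦ C) s :=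
        setLIntegral_mono' measurableSet_Ioi hbound
    _ = ENNReal.ofReal (1 / κ) + C * volume (Ioc 0 M) := by
        rw [lintegral_add_left (by fun_prop), lintegral_Ioi_ofReal_exp_neg_mul hκ,
          lintegral_indicator_const measurableSet_Iic, Measure.restrict_apply measurableSet_Iic,
          Iic_inter_Ioi]
    _ ≤ ENNReal.ofReal (1 / κ) + ENNReal.ofReal (1 / (κ * T)) * ENNReal.ofReal M := by
        rw [Real.volume_Ioc, sub_zero]
        gcongr
    _ = ENNReal.ofReal ((1 + M / T) / κ) := by
        rw [← ENNReal.ofReal_mul (by positivity), ← ENNReal.ofReal_add (by positivity)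
          (by positivity)]
        congr 1
        field_simp

lemma lt_ciInf_iff_of_finite {ι α : Type*} [Finite ι] [Nonempty ι]
    [ConditionallyCompleteLinearOrder α] {g : ι → α} {r : α} : r < ⨅ j, g j ↔ ∀ j, r < g j := by
  obtain ⟨i, hi⟩ := exists_eq_ciInf_of_finite (f := g)
  exact ⟨fun h j ↦ h.trans_le (Finite.ciInf_le g j), fun h ↦ hi ▸ h i⟩

section MinDistance

variable {Ω E ι : Type*} [MeasurableSpace Ω] {P : Measure Ω} [MeasurableSpace E]
  {Y : ι → Ω → E} {μ : Measure E}

lemma ProbabilityTheory.iIndepFun.measure_iInter_preimage_eq_pow [Fintype ι]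
    (hYm : ∀ j, Measurable (Y j)) (hY : iIndepFun Y P) (hlaw : ∀ j, P.map (Y j) = μ)
    {S : Set E} (hS : MeasurableSet S) : P (⋂ j, Y j ⁻¹' S) = μ S ^ Fintype.card ι := by
  rw [hY.meas_iInter fun j ↦ ⟨S, hS, rfl⟩, ← Finset.card_univ, ← Finset.prod_const]
  refine Finset.prod_congr rfl fun j _ ↦ ?_
  rw [← Measure.map_apply (hYm j) hS, hlaw j]

variable [NormedAddCommGroup E]

lemma measure_lt_iInf_norm_sub_eq_pow [OpensMeasurableSpace E] [Fintype ι] [Nonempty ι]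
    (hYm : ∀ j, Measurable (Y j)) (hY : iIndepFun Y P) (hlaw : ∀ j, P.map (Y j) = μ)
    (x : E) (r : ℝ) :
    P {ω | r < ⨅ j, ‖Y j ω - x‖} = μ (closedBall x r)ᶜ ^ Fintype.card ι := by
  rw [← hY.measure_iInter_preimage_eq_pow hYm hlaw measurableSet_closedBall.compl]
  congr 1
  ext ω
  simp [lt_ciInf_iff_of_finite, dist_eq_norm]

lemma measure_lt_iInf_norm_sub_pow_le_exp [OpensMeasurableSpace E] [IsProbabilityMeasure μ]
    [Fintype ι] [Nonempty ι] (hYm : ∀ j, Measurable (Y j)) (hY : iIndepFun Y P)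
    (hlaw : ∀ j, P.map (Y j) = μ) {x : E} {d : ℕ} (hd : d ≠ 0) {a t₀ : ℝ} (ha : 0 ≤ a)
    (ht₀ : 0 ≤ t₀) (hμball : ∀ t ∈ Ioc 0 t₀, ENNReal.ofReal (a * t ^ d) ≤ μ (closedBall x t))
    {s : ℝ} (hs : s ∈ Ioc 0 (t₀ ^ d)) :
    P {ω | s < (⨅ j, ‖Y j ω - x‖) ^ d} ≤
      ENNReal.ofReal (Real.exp (-(Fintype.card ι * a) * s)) := by
  set t := s ^ ((d : ℝ)⁻¹)
  have htd : t ^ d = s := Real.rpow_inv_natCast_pow hs.1.le hd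
  have ht : t ∈ Ioc 0 t₀ := ⟨Real.rpow_pos_of_pos hs.1 _,
    (pow_le_pow_iff_left₀ (Real.rpow_nonneg hs.1.le _) ht₀ hd).1 (htd.symm ▸ hs.2)⟩
  have hevent : {ω | s < (⨅ j, ‖Y j ω - x‖) ^ d} = {ω | t < ⨅ j, ‖Y j ω - x‖} := by
    ext ω
    rw [mem_ofPred_eq, mem_ofPred_eq, ← htd,
      pow_lt_pow_iff_left₀ ht.1.le (le_ciInf fun j ↦ norm_nonneg _) hd]
  calc P {ω | s < (⨅ j, ‖Y j ω - x‖) ^ d} = μ (closedBall x t)ᶜ ^ Fintype.card ι := by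
        rw [hevent, measure_lt_iInf_norm_sub_eq_pow hYm hY hlaw]
    _ ≤ (1 - ENNReal.ofReal (a * s)) ^ Fintype.card ι := by
        rw [prob_compl_eq_one_sub measurableSet_closedBall, ← htd]
        gcongr
        exact hμball t ht
    _ ≤ ENNReal.ofReal (Real.exp (-(Fintype.card ι * a) * s)) := by
        rw [neg_mul, mul_assoc]
        exact ENNReal.one_sub_ofReal_pow_le_ofReal_exp (mul_nonneg ha hs.1.le) _

lemma ae_iInf_norm_sub_le [Finite ι] [Nonempty ι] (hYm : ∀ j, Measurable (Y j))
    (hlaw : ∀ j, P.map (Y j) = μ) {x : E} {D : ℝ} (hD : ∀ᵐ y ∂μ, y ∈ closedBall x D) :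
    ∀ᵐ ω ∂P, ⨅ j, ‖Y j ω - x‖ ≤ D := by
  obtain ⟨j⟩ := ‹Nonempty ι›
  have hj : ∀ᵐ ω ∂P, Y j ω ∈ closedBall x D :=
    ae_of_ae_map (hYm j).aemeasurable (hlaw j ▸ hD)
  filter_upwards [hj] with ω hω
  exact (Finite.ciInf_le _ j).trans (by rwa [mem_closedBall, dist_eq_norm] at hω)

end MinDistance

theorem min_dist_pow_expectation_le_general (d : ℕ) (hd : 1 ≤ d)
    (X : Set (EuclideanSpace ℝ (Fin d)))
    (x : EuclideanSpace ℝ (Fin d)) (D : ℝ) (hD : 0 < D)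
    (hXD : X ⊆ Metric.closedBall x D)
    (μ : Measure (EuclideanSpace ℝ (Fin d))) (hμ : IsProbabilityMeasure μ)
    (hμX : μ X = 1)
    (fmin : ℝ) (hfmin : 0 < fmin)
    (hlower : ∀ A : Set (EuclideanSpace ℝ (Fin d)), MeasurableSet A →
      ENNReal.ofReal fmin * volume (A ∩ X) ≤ μ A)
    (c t₀ : ℝ) (hc : 0 < c) (ht₀ : 0 < t₀)
    (hball : ∀ t ∈ Set.Ioc (0:ℝ) t₀,
      ENNReal.ofReal (c * t ^ d) ≤ volume (Metric.closedBall x t ∩ X)) :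
    ∃ β : ℝ, 0 < β ∧ ∀ n : ℕ, 1 ≤ n →
      ∀ (Ω : Type) (mΩ : MeasurableSpace Ω) (P : Measure Ω),
        IsProbabilityMeasure P →
        ∀ Y : Fin n → Ω → EuclideanSpace ℝ (Fin d),
          (∀ j, Measurable (Y j)) →
          iIndepFun Y P →
          (∀ j, Measure.map (Y j) P = μ) →
          ∫⁻ ω, ENNReal.ofReal ((⨅ j : Fin n, ‖Y j ω - x‖) ^ d) ∂P ≤
            ENNReal.ofReal (β / n) := by
  obtain ⟨a, ha, hμball⟩ : ∃ a > 0, ∀ t ∈ Ioc 0 t₀,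
      ENNReal.ofReal (a * t ^ d) ≤ μ (closedBall x t) := by
    refine ⟨fmin * c, by positivity, fun t ht ↦ ?_⟩
    calc ENNReal.ofReal (fmin * c * t ^ d)
        = ENNReal.ofReal fmin * ENNReal.ofReal (c * t ^ d) := by
          rw [← ENNReal.ofReal_mul hfmin.le, mul_assoc]
      _ ≤ ENNReal.ofReal fmin * volume (closedBall x t ∩ X) := by gcongr; exact hball t ht
      _ ≤ μ (closedBall x t) := hlower _ measurableSet_closedBall
  have hsupp : ∀ᵐ y ∂μ, y ∈ closedBall x D := mem_ae_iff.2 <|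
    (prob_compl_eq_zero_iff measurableSet_closedBall).2 <|
      le_antisymm prob_le_one (hμX ▸ measure_mono hXD)
  refine ⟨(1 + D ^ d / t₀ ^ d) / a, by positivity, fun n hn Ω _ P _ Y hYm hY hlaw ↦ ?_⟩
  have : Nonempty (Fin n) := ⟨⟨0, hn⟩⟩
  have hR₀ : ∀ ω, 0 ≤ ⨅ j, ‖Y j ω - x‖ := fun ω ↦ le_ciInf fun j ↦ norm_nonneg _
  have hRm : Measurable fun ω ↦ ⨅ j, ‖Y j ω - x‖ :=
    Measurable.iInf fun j ↦ ((hYm j).sub_const x).norm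
  have hRD : ∀ᵐ ω ∂P, (⨅ j, ‖Y j ω - x‖) ^ d ≤ D ^ d :=
    (ae_iInf_norm_sub_le hYm hlaw hsupp).mono fun ω h ↦ pow_le_pow_left₀ (hR₀ ω) h d
  have htail : ∀ s ∈ Ioc 0 (t₀ ^ d),
      P {ω | s < (⨅ j, ‖Y j ω - x‖) ^ d} ≤ ENNReal.ofReal (Real.exp (-(n * a) * s)) :=
    fun s hs ↦ by simpa using
      measure_lt_iInf_norm_sub_pow_le_exp hYm hY hlaw (by omega) ha.le ht₀.le hμball hs
  calc _ ≤ ENNReal.ofReal ((1 + D ^ d / t₀ ^ d) / (n * a)) :=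
        lintegral_ofReal_le_of_tail_le_exp (fun ω ↦ pow_nonneg (hR₀ ω) d)
          (hRm.pow_const d).aemeasurable (by positivity) (by positivity) (by positivity) hRD htail
    _ = ENNReal.ofReal ((1 + D ^ d / t₀ ^ d) / a / n) := by rw [div_div, mul_comm a]

/-- Order statistics bound: the expected `d`-th power of the minimum distance from `x`
to `n` i.i.d. samples with law `μ` is at most `β / n`. -/
theorem min_dist_pow_expectation_le (d : ℕ) (hd : 1 ≤ d)
    (X : Set (EuclideanSpace ℝ (Fin d))) (hX : MeasurableSet X)
    (x : EuclideanSpace ℝ (Fin d)) (D : ℝ) (hD : 0 < D)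
    (hXD : X ⊆ Metric.closedBall x D)
    (μ : Measure (EuclideanSpace ℝ (Fin d))) (hμ : IsProbabilityMeasure μ)
    (hμX : μ X = 1)
    (fmin : ℝ) (hfmin : 0 < fmin)
    (hlower : ∀ A : Set (EuclideanSpace ℝ (Fin d)), MeasurableSet A →
      ENNReal.ofReal fmin * volume (A ∩ X) ≤ μ A)
    (c t₀ : ℝ) (hc : 0 < c) (ht₀ : 0 < t₀)
    (hball : ∀ t ∈ Set.Ioc (0:ℝ) t₀,
      ENNReal.ofReal (c * t ^ d) ≤ volume (Metric.closedBall x t ∩ X)) :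
    ∃ β : ℝ, 0 < β ∧ ∀ n : ℕ, 1 ≤ n →
      ∀ (Ω : Type) (mΩ : MeasurableSpace Ω) (P : Measure Ω),
        IsProbabilityMeasure P →
        ∀ Y : Fin n → Ω → EuclideanSpace ℝ (Fin d),
          (∀ j, Measurable (Y j)) →
          iIndepFun Y P →
          (∀ j, Measure.map (Y j) P = μ) →
          ∫⁻ ω, ENNReal.ofReal ((⨅ j : Fin n, ‖Y j ω - x‖) ^ d) ∂P ≤
            ENNReal.ofReal (β / n) :=
  min_dist_pow_expectation_le_general d hd X x D hD hXD μ hμ hμX fmin hfmin hlower c t₀ hc ht₀ hball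
end

section
/- Let X ⊆ ℝ^d be measurable with 0 < λ(X) < ∞, let r > 0, and let X_1, …, X_n (n ≥ 1) be i.i.d. random points uniformly distributed on X. Suppose there is c ∈ (0,1] such that λ(B̄(x,r) ∩ X) ≥ c · λ(X) for all x ∈ X. Call X_i isolated if ‖X_j − X_i‖ > r for all j ≠ i, and let N denote the number of isolated points. Then E[N] ≤ n (1 − c)^{n−1}. -/
open MeasureTheory ProbabilityTheory
open scoped ENNReal Classical

/-- The uniform probability measure on a set `X` of positive finite volume. -/
noncomputable def uniformOnSet (d : ℕ) (X : Set (EuclideanSpace ℝ (Fin d))) :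
    Measure (EuclideanSpace ℝ (Fin d)) :=
  (volume X)⁻¹ • volume.restrict X

/-! By linearity of expectation it suffices to bound the probability that a fixed `Y i` is
isolated by `(1 - c)^(n-1)`. Conditionally on `Y i = a`, the other `n - 1` points are independent
and each avoids `closedBall a r` with probability `1 - λ(closedBall a r ∩ X) / λ(X) ≤ 1 - c`. -/

section

variable {Ω E ι : Type*} [MeasurableSpace Ω] [MeasurableSpace E] {P : Measure Ω}
  {Y : ι → Ω → E} {μ : Measure E}

theorem measurableSet_forall_ne_mem [Countable ι] (hmeas : ∀ j, Measurable (Y j))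
    {S : Set (E × E)} (hS : MeasurableSet S) (i : ι) :
    MeasurableSet {ω | ∀ j, j ≠ i → (Y i ω, Y j ω) ∈ S} := by
  simp only [Set.ofPred_forall]
  exact .iInter fun j => .iInter fun _ => hS.preimage ((hmeas i).prodMk (hmeas j))

theorem lintegral_card_filter_mem [Fintype ι] {A : ι → Set Ω}
    [∀ ω, DecidablePred fun i => ω ∈ A i] (hA : ∀ i, MeasurableSet (A i)) :
    ∫⁻ ω, (Finset.univ.filter (fun i => ω ∈ A i)).card ∂P = ∑ i, P (A i) := by
  have hcard : ∀ ω, ((Finset.univ.filter (fun i => ω ∈ A i)).card : ℝ≥0∞) =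
      ∑ i, (A i).indicator 1 ω := by
    intro ω
    simp [Set.indicator_apply]
  simp_rw [hcard]
  rw [lintegral_finsetSum _ fun i _ => measurable_one.indicator (hA i)]
  exact Finset.sum_congr rfl fun i _ => lintegral_indicator_one (hA i)

namespace ProbabilityTheory

theorem iIndepFun.measure_biInter_preimage_eq_pow (hindep : iIndepFun Y P)
    (hmeas : ∀ j, Measurable (Y j)) (hlaw : ∀ j, P.map (Y j) = μ) (T : Finset ι) {A : Set E}
    (hA : MeasurableSet A) : P (⋂ j ∈ T, Y j ⁻¹' A) = μ A ^ T.card := by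
  rw [hindep.measure_inter_preimage_eq_mul T (sets := fun _ => A) (fun _ _ => hA),
    ← Finset.prod_const]
  refine Finset.prod_congr rfl fun j _ => ?_
  rw [← hlaw j, Measure.map_apply (hmeas j) hA]

theorem iIndepFun.indepFun_erase [Fintype ι] (hindep : iIndepFun Y P)
    (hmeas : ∀ j, Measurable (Y j)) (i : ι) :
    IndepFun (Y i) (fun ω (k : Finset.univ.erase i) => Y k ω) P := by
  simpa [Function.comp_def] using
    (hindep.indepFun_finset {i} (Finset.univ.erase i) (by simp) hmeas).comp
      (measurable_pi_apply ⟨i, Finset.mem_singleton_self i⟩) measurable_id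

theorem iIndepFun.measure_forall_ne_mem_le [Fintype ι] (hindep : iIndepFun Y P)
    (hmeas : ∀ j, Measurable (Y j)) (hlaw : ∀ j, P.map (Y j) = μ) {S : Set (E × E)}
    (hS : MeasurableSet S) {p : ℝ≥0∞} (hp : ∀ᵐ a ∂μ, μ (Prod.mk a ⁻¹' S) ≤ p) (i : ι) :
    P {ω | ∀ j, j ≠ i → (Y i ω, Y j ω) ∈ S} ≤ p ^ (Fintype.card ι - 1) := by
  have := hindep.isProbabilityMeasure
  have : IsProbabilityMeasure μ :=
    hlaw i ▸ Measure.isProbabilityMeasure_map (hmeas i).aemeasurable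
  set T := Finset.univ.erase i
  set G : Ω → (T → E) := fun ω k => Y k ω
  have hG : Measurable G := measurable_pi_lambda _ fun k => hmeas k
  have hjoint : P.map (fun ω => (Y i ω, G ω)) = μ.prod (P.map G) := by
    rw [← hlaw i]
    exact (hindep.indepFun_erase hmeas i).map_prod_eq_prod_map_map (hmeas i).aemeasurable
      hG.aemeasurable
  set S' : Set (E × (T → E)) := {q | ∀ k, (q.1, q.2 k) ∈ S}
  have hS' : MeasurableSet S' := by
    simp only [S', Set.ofPred_forall]
    exact .iInter fun k =>
      hS.preimage (measurable_fst.prodMk ((measurable_pi_apply k).comp measurable_snd))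
  have hevent : {ω | ∀ j, j ≠ i → (Y i ω, Y j ω) ∈ S} = (fun ω => (Y i ω, G ω)) ⁻¹' S' := by
    ext ω
    simp [S', G, T]
  have hsection :
      ∀ a, P.map G (Prod.mk a ⁻¹' S') = μ (Prod.mk a ⁻¹' S) ^ (Fintype.card ι - 1) := by
    intro a
    have hpre : G ⁻¹' (Prod.mk a ⁻¹' S') = ⋂ j ∈ T, Y j ⁻¹' (Prod.mk a ⁻¹' S) := by
      ext ω
      simp [S', G]
    rw [Measure.map_apply hG (measurable_prodMk_left hS'), hpre,
      hindep.measure_biInter_preimage_eq_pow hmeas hlaw T (measurable_prodMk_left hS),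
      Finset.card_erase_of_mem (Finset.mem_univ i), Finset.card_univ]
  calc P {ω | ∀ j, j ≠ i → (Y i ω, Y j ω) ∈ S}
      = ∫⁻ a, P.map G (Prod.mk a ⁻¹' S') ∂μ := by
        rw [hevent, ← Measure.map_apply ((hmeas i).prodMk hG) hS', hjoint,
          Measure.prod_apply hS']
    _ ≤ ∫⁻ _, p ^ (Fintype.card ι - 1) ∂μ := lintegral_mono_ae <| by
        filter_upwards [hp] with a ha
        rw [hsection]
        gcongr
    _ = p ^ (Fintype.card ι - 1) := by rw [lintegral_const, measure_univ, mul_one]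

end ProbabilityTheory

end

section UniformOnSet

variable {d : ℕ} {X : Set (EuclideanSpace ℝ (Fin d))}

theorem uniformOnSet_apply {s : Set (EuclideanSpace ℝ (Fin d))} (hs : MeasurableSet s) :
    uniformOnSet d X s = (volume X)⁻¹ * volume (s ∩ X) := by
  simp [uniformOnSet, Measure.restrict_apply hs]

theorem isProbabilityMeasure_uniformOnSet (hX0 : volume X ≠ 0) (hXfin : volume X ≠ ∞) :
    IsProbabilityMeasure (uniformOnSet d X) :=
  ⟨by rw [uniformOnSet_apply .univ, Set.univ_inter, ENNReal.inv_mul_cancel hX0 hXfin]⟩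

theorem ae_mem_uniformOnSet (hX : MeasurableSet X) : ∀ᵐ a ∂uniformOnSet d X, a ∈ X :=
  Measure.ae_smul_measure (ae_restrict_mem hX) _

theorem uniformOnSet_compl_le (hX0 : volume X ≠ 0) (hXfin : volume X ≠ ∞)
    {s : Set (EuclideanSpace ℝ (Fin d))} (hs : MeasurableSet s) {c : ℝ≥0∞}
    (hc : c * volume X ≤ volume (s ∩ X)) : uniformOnSet d X sᶜ ≤ 1 - c := by
  have := isProbabilityMeasure_uniformOnSet hX0 hXfin
  rw [prob_compl_eq_one_sub hs]
  gcongr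
  calc c = (volume X)⁻¹ * (c * volume X) := by
        rw [mul_comm c, ← mul_assoc, ENNReal.inv_mul_cancel hX0 hXfin, one_mul]
    _ ≤ uniformOnSet d X s := by
        rw [uniformOnSet_apply hs]
        gcongr

end UniformOnSet

theorem expected_isolated_points_le_general (d n : ℕ)
    (X : Set (EuclideanSpace ℝ (Fin d))) (hX : MeasurableSet X)
    (hX0 : 0 < volume X) (hXfin : volume X < ⊤)
    (r : ℝ)
    (c : ℝ) (hc : c ∈ Set.Ioc (0:ℝ) 1)
    (hball : ∀ x ∈ X, ENNReal.ofReal c * volume X ≤ volume (Metric.closedBall x r ∩ X))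
    (Ω : Type) (mΩ : MeasurableSpace Ω) (P : Measure Ω)
    (Y : Fin n → Ω → EuclideanSpace ℝ (Fin d))
    (hmeas : ∀ j, Measurable (Y j))
    (hindep : iIndepFun Y P)
    (hlaw : ∀ j, Measure.map (Y j) P = uniformOnSet d X) :
    ∫⁻ ω, ((Finset.univ.filter (fun i : Fin n =>
          ∀ j : Fin n, j ≠ i → r < ‖Y j ω - Y i ω‖)).card : ℝ≥0∞) ∂P ≤
      (n : ℝ≥0∞) * ENNReal.ofReal ((1 - c) ^ (n - 1)) := by
  set S : Set (EuclideanSpace ℝ (Fin d) × EuclideanSpace ℝ (Fin d)) := {q | r < ‖q.2 - q.1‖}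
  have hS : MeasurableSet S := measurableSet_lt measurable_const (by fun_prop)
  have hfar : ∀ᵐ a ∂uniformOnSet d X,
      uniformOnSet d X (Prod.mk a ⁻¹' S) ≤ 1 - ENNReal.ofReal c := by
    filter_upwards [ae_mem_uniformOnSet hX] with a ha
    have hsection : Prod.mk a ⁻¹' S = (Metric.closedBall a r)ᶜ := by
      ext b
      simp [S, dist_eq_norm]
    rw [hsection]
    exact uniformOnSet_compl_le hX0.ne' hXfin.ne measurableSet_closedBall (hball a ha)
  have hpow : (1 - ENNReal.ofReal c) ^ (n - 1) = ENNReal.ofReal ((1 - c) ^ (n - 1)) := by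
    rw [ENNReal.ofReal_pow (sub_nonneg.2 hc.2), ENNReal.ofReal_sub _ hc.1.le, ENNReal.ofReal_one]
  calc _ = ∑ i, P {ω | ∀ j, j ≠ i → (Y i ω, Y j ω) ∈ S} :=
        lintegral_card_filter_mem fun i => measurableSet_forall_ne_mem hmeas hS i
    _ ≤ ∑ _i : Fin n, ENNReal.ofReal ((1 - c) ^ (n - 1)) := Finset.sum_le_sum fun i _ => by
        simpa [hpow] using hindep.measure_forall_ne_mem_le hmeas hlaw hS hfar i
    _ = (n : ℝ≥0∞) * ENNReal.ofReal ((1 - c) ^ (n - 1)) := by simp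

/-- If every ball of radius `r` centered in `X` captures at least a fraction `c` of the
volume of `X`, the expected number of isolated points among `n` i.i.d. uniform samples is
at most `n (1 - c)^(n-1)`. -/
theorem expected_isolated_points_le (d n : ℕ) (hn : 1 ≤ n)
    (X : Set (EuclideanSpace ℝ (Fin d))) (hX : MeasurableSet X)
    (hX0 : 0 < volume X) (hXfin : volume X < ⊤)
    (r : ℝ) (hr : 0 < r)
    (c : ℝ) (hc : c ∈ Set.Ioc (0:ℝ) 1)
    (hball : ∀ x ∈ X, ENNReal.ofReal c * volume X ≤ volume (Metric.closedBall x r ∩ X))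
    (Ω : Type) (mΩ : MeasurableSpace Ω) (P : Measure Ω) (hP : IsProbabilityMeasure P)
    (Y : Fin n → Ω → EuclideanSpace ℝ (Fin d))
    (hmeas : ∀ j, Measurable (Y j))
    (hindep : iIndepFun Y P)
    (hlaw : ∀ j, Measure.map (Y j) P = uniformOnSet d X) :
    ∫⁻ ω, ((Finset.univ.filter (fun i : Fin n =>
          ∀ j : Fin n, j ≠ i → r < ‖Y j ω - Y i ω‖)).card : ℝ≥0∞) ∂P ≤
      (n : ℝ≥0∞) * ENNReal.ofReal ((1 - c) ^ (n - 1)) :=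
  expected_isolated_points_le_general d n X hX hX0 hXfin r c hc hball Ω mΩ P Y hmeas hindep hlaw
end

section
/- Let f : ℝ^d → ℝ be a continuous, bounded, nonnegative function with ∫_{ℝ^d} f dλ = 1, and let X and Y be independent random points in ℝ^d, each with probability density f with respect to Lebesgue measure. Then lim_{r→0+} P(‖X − Y‖ ≤ r) / r^d = ζ_d · ∫_{ℝ^d} f(x)^2 dλ(x). -/
/-!
Writing `μ = f λ` for the common law, independence gives
`P(‖X − Y‖ ≤ r) = ∫ f(x) μ(B(x, r)) dx`. By the Lebesgue differentiation theorem
`μ(B(x, r)) / r^d → ζ_d f(x)` for almost every `x`, and `μ(B(x, r)) ≤ (sup f) ζ_d r^d`, so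
dominated convergence yields the limit `ζ_d ∫ f²`.
-/

open MeasureTheory Measure ProbabilityTheory Filter Metric Topology Module

section MetricSpace

variable {α : Type*} [PseudoMetricSpace α] [MeasurableSpace α] [OpensMeasurableSpace α]
  [SecondCountableTopology α]

theorem ProbabilityTheory.IndepFun.measure_dist_le_eq_lintegral {Ω : Type*}
    {mΩ : MeasurableSpace Ω} {P : Measure Ω} [IsFiniteMeasure P] {X Y : Ω → α}
    (hX : Measurable X) (hY : Measurable Y) (hXY : IndepFun X Y P) (r : ℝ) :
    P {ω | dist (X ω) (Y ω) ≤ r} = ∫⁻ x, P.map Y (closedBall x r) ∂P.map X := by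
  have hT : MeasurableSet {p : α × α | dist p.1 p.2 ≤ r} :=
    measurableSet_le measurable_dist measurable_const
  have hpair : P {ω | dist (X ω) (Y ω) ≤ r}
      = P.map (fun ω => (X ω, Y ω)) {p | dist p.1 p.2 ≤ r} :=
    (map_apply (hX.prodMk hY) hT).symm
  rw [hpair, (indepFun_iff_map_prod_eq_prod_map_map hX.aemeasurable hY.aemeasurable).1 hXY,
    prod_apply hT]
  congr with x
  congr with y
  simp [dist_comm]

theorem MeasureTheory.AEStronglyMeasurable.setIntegral_closedBall {G : Type*}
    [NormedAddCommGroup G] [NormedSpace ℝ G] {μ ν : Measure α} [SFinite μ] [SFinite ν]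
    {f : α → G} (hf : AEStronglyMeasurable f μ) (r : ℝ) :
    AEStronglyMeasurable (fun x => ∫ y in closedBall x r, f y ∂μ) ν := by
  -- the slice of `{p | dist p.2 p.1 ≤ r}` over `x` is `closedBall x r` by definition
  have hT : MeasurableSet {p : α × α | dist p.2 p.1 ≤ r} :=
    measurableSet_le (measurable_snd.dist measurable_fst) measurable_const
  exact ((hf.comp_snd (μ := ν)).indicator hT).integral_prod_right'.congr
    (ae_of_all _ fun _ => integral_indicator measurableSet_closedBall)

theorem toReal_lintegral_withDensity_closedBall {μ : Measure α} [SFinite μ] {f : α → ℝ}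
    (hf : Integrable f μ) (hf_nonneg : 0 ≤ᵐ[μ] f) (r : ℝ) :
    (∫⁻ x, μ.withDensity (fun y => ENNReal.ofReal (f y)) (closedBall x r)
        ∂μ.withDensity (fun y => ENNReal.ofReal (f y))).toReal
      = ∫ x, f x * ∫ y in closedBall x r, f y ∂μ ∂μ := by
  have hball : ∀ x, μ.withDensity (fun y => ENNReal.ofReal (f y)) (closedBall x r)
      = ENNReal.ofReal (∫ y in closedBall x r, f y ∂μ) := fun x => by
    rw [withDensity_apply _ measurableSet_closedBall,
      ofReal_integral_eq_lintegral_ofReal hf.integrableOn (ae_restrict_of_ae hf_nonneg)]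
  have hball_nonneg : ∀ x, 0 ≤ ∫ y in closedBall x r, f y ∂μ := fun x =>
    integral_nonneg_of_ae (ae_restrict_of_ae hf_nonneg)
  simp_rw [hball]
  rw [← integral_eq_lintegral_of_nonneg_ae (ae_of_all _ hball_nonneg)
      (hf.aestronglyMeasurable.setIntegral_closedBall r),
    integral_withDensity_eq_integral_toReal_smul₀ hf.aemeasurable.ennreal_ofReal
      (ae_of_all _ fun _ => ENNReal.ofReal_lt_top)]
  refine integral_congr_ae ?_
  filter_upwards [hf_nonneg] with x hx
  rw [ENNReal.toReal_ofReal hx, smul_eq_mul]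

end MetricSpace

section AddHaar

variable {E : Type*} [NormedAddCommGroup E] [NormedSpace ℝ E] [FiniteDimensional ℝ E]
  [MeasurableSpace E] [BorelSpace E] (μ : Measure E) [IsAddHaarMeasure μ]

theorem ae_tendsto_setIntegral_closedBall_div_pow {f : E → ℝ} (hf : LocallyIntegrable f μ) :
    ∀ᵐ x ∂μ, Tendsto (fun r => (∫ y in closedBall x r, f y ∂μ) / r ^ finrank ℝ E) (𝓝[>] 0)
      (𝓝 (μ.real (closedBall 0 1) * f x)) := by
  have hζ : μ.real (closedBall (0 : E) 1) ≠ 0 :=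
    (measureReal_ne_zero_iff measure_closedBall_lt_top.ne).2
      (measure_closedBall_pos μ 0 one_pos).ne'
  filter_upwards [IsUnifLocDoublingMeasure.ae_tendsto_average μ hf 1] with x hx
  have havg := hx (fun _ => x) id tendsto_id
    (eventually_mem_nhdsWithin.mono fun r hr => mem_closedBall_self (by simpa using hr.le))
  refine (havg.const_mul _).congr' (eventually_mem_nhdsWithin.mono fun r (hr : 0 < r) => ?_)
  rw [id, setAverage_eq, addHaar_real_closedBall' μ x hr.le, smul_eq_mul]
  field_simp

theorem tendsto_integral_mul_setIntegral_closedBall_div_pow {f : E → ℝ} (hf : Integrable f μ)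
    {M : ℝ} (hM : ∀ᵐ x ∂μ, ‖f x‖ ≤ M) :
    Tendsto (fun r => (∫ x, f x * ∫ y in closedBall x r, f y ∂μ ∂μ) / r ^ finrank ℝ E)
      (𝓝[>] 0) (𝓝 (μ.real (closedBall 0 1) * ∫ x, f x ^ 2 ∂μ)) := by
  set ζ := μ.real (closedBall (0 : E) 1)
  have hball_le : ∀ r, 0 < r → ∀ x,
      ‖(∫ y in closedBall x r, f y ∂μ) / r ^ finrank ℝ E‖ ≤ M * ζ := fun r hr x => by
    have hr_pow : 0 < r ^ finrank ℝ E := pow_pos hr _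
    have hint := norm_setIntegral_le_of_norm_le_const_ae (s := closedBall x r)
      measure_closedBall_lt_top (ae_restrict_of_ae hM)
    rw [addHaar_real_closedBall' μ x hr.le] at hint
    rw [norm_div, Real.norm_of_nonneg hr_pow.le, div_le_iff₀ hr_pow]
    linarith
  have hlimit : ζ * ∫ x, f x ^ 2 ∂μ = ∫ x, f x * (ζ * f x) ∂μ := by
    rw [← integral_const_mul]
    congr with x
    ring
  simp_rw [hlimit, ← integral_div, mul_div_assoc]
  refine tendsto_integral_filter_of_dominated_convergence (fun x => ‖f x‖ * (M * ζ))
    (Eventually.of_forall fun r => hf.aestronglyMeasurable.mul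
      ((hf.aestronglyMeasurable.setIntegral_closedBall (ν := μ) r).mul_const _))
    (eventually_mem_nhdsWithin.mono fun r hr => ae_of_all _ fun x => ?_)
    (hf.norm.mul_const _) ?_
  · rw [norm_mul]
    exact mul_le_mul_of_nonneg_left (hball_le r hr x) (norm_nonneg _)
  · filter_upwards [ae_tendsto_setIntegral_closedBall_div_pow μ hf.locallyIntegrable] with x hx
    exact hx.const_mul (f x)

end AddHaar

theorem close_pair_probability_asymptotics_general (d : ℕ)
    (f : EuclideanSpace ℝ (Fin d) → ℝ)
    (hf_bdd : ∃ M : ℝ, ∀ x, f x ≤ M)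
    (hf_nonneg : ∀ x, 0 ≤ f x)
    (hf_int : ∫ x, f x = 1)
    (Ω : Type) (mΩ : MeasurableSpace Ω) (P : Measure Ω) (hP : IsProbabilityMeasure P)
    (X Y : Ω → EuclideanSpace ℝ (Fin d))
    (hX : Measurable X) (hY : Measurable Y)
    (hindep : IndepFun X Y P)
    (hlawX : Measure.map X P = volume.withDensity (fun x => ENNReal.ofReal (f x)))
    (hlawY : Measure.map Y P = volume.withDensity (fun x => ENNReal.ofReal (f x))) :
    Tendsto (fun r : ℝ => (P {ω | ‖X ω - Y ω‖ ≤ r}).toReal / r ^ d)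
      (nhdsWithin 0 (Set.Ioi 0))
      (nhds ((volume (Metric.closedBall (0 : EuclideanSpace ℝ (Fin d)) 1)).toReal *
        ∫ x, f x ^ 2)) := by
  obtain ⟨M, hM⟩ := hf_bdd
  have hf : Integrable f := .of_integral_ne_zero (by rw [hf_int]; exact one_ne_zero)
  have hprob : ∀ r, (P {ω | ‖X ω - Y ω‖ ≤ r}).toReal
      = ∫ x, f x * ∫ y in closedBall x r, f y := fun r => by
    simp_rw [← dist_eq_norm]
    rw [hindep.measure_dist_le_eq_lintegral hX hY, hlawX, hlawY,
      toReal_lintegral_withDensity_closedBall hf (ae_of_all _ hf_nonneg)]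
  simp_rw [hprob]
  have hf_norm_le : ∀ x, ‖f x‖ ≤ M := fun x =>
    (Real.norm_of_nonneg (hf_nonneg x)).trans_le (hM x)
  have hlim := tendsto_integral_mul_setIntegral_closedBall_div_pow volume hf
    (ae_of_all _ hf_norm_le)
  rwa [finrank_euclideanSpace_fin] at hlim

/-- For two independent points with common bounded continuous density `f`,
`P(‖X − Y‖ ≤ r)/r^d → ζ_d ∫ f²` as `r → 0⁺`. -/
theorem close_pair_probability_asymptotics (d : ℕ)
    (f : EuclideanSpace ℝ (Fin d) → ℝ)
    (hf_cont : Continuous f) (hf_bdd : ∃ M : ℝ, ∀ x, f x ≤ M)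
    (hf_nonneg : ∀ x, 0 ≤ f x)
    (hf_int : ∫ x, f x = 1)
    (Ω : Type) (mΩ : MeasurableSpace Ω) (P : Measure Ω) (hP : IsProbabilityMeasure P)
    (X Y : Ω → EuclideanSpace ℝ (Fin d))
    (hX : Measurable X) (hY : Measurable Y)
    (hindep : IndepFun X Y P)
    (hlawX : Measure.map X P = volume.withDensity (fun x => ENNReal.ofReal (f x)))
    (hlawY : Measure.map Y P = volume.withDensity (fun x => ENNReal.ofReal (f x))) :
    Tendsto (fun r : ℝ => (P {ω | ‖X ω - Y ω‖ ≤ r}).toReal / r ^ d)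
      (nhdsWithin 0 (Set.Ioi 0))
      (nhds ((volume (Metric.closedBall (0 : EuclideanSpace ℝ (Fin d)) 1)).toReal *
        ∫ x, f x ^ 2)) :=
  close_pair_probability_asymptotics_general d f hf_bdd hf_nonneg hf_int Ω mΩ P hP X Y hX hY hindep
    hlawX hlawY
end
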